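/- arXiv:1405.2421 — 2 statements merged into one kernel-verified Lean document; each statement's English description precedes it below -/
import Mathlib

section
/- Let A ∈ ℝ^{n×n}, B ∈ ℝ^{n×m}, C ∈ ℝ^{p×n} with p ≤ m. If the pair (A,B) is controllable and the matrix [[A, B],[C, 0]] (of size (n+p)×(n+m)) has rank n+p, then the augmented pair (Â, B̂) with Â = [[A, 0],[-C, 0]] ∈ ℝ^{(n+p)×(n+p)} and B̂ = [[B],[0]] ∈ ℝ^{(n+p)×m} is controllable. -/
/-!
Let `(x, y)` be a row vector annihilating the controllability matrix of the augmented pair. By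
Cayley–Hamilton it annihilates `Â ^ k * B̂` for every `k`: for `k = 0` this says `x B = 0`, and
for `k + 1` it says `(x A - y C) A ^ k B = 0`, so controllability of `(A, B)` forces
`x A - y C = 0`. Then `(x, -y)` annihilates the rows of `[[A, B], [C, 0]]`, which are independent
by the rank hypothesis, hence `x = 0` and `y = 0`.
-/

open Matrix

/-- Controllability matrix `[B, AB, ..., A^{card ι - 1} B]` of a pair `(A, B)`. -/
def ctrb {ι : Type} [Fintype ι] [DecidableEq ι] {m : ℕ}
    (A : Matrix ι ι ℝ) (B : Matrix ι (Fin m) ℝ) :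
    Matrix ι (Fin (Fintype.card ι) × Fin m) ℝ :=
  Matrix.of fun i kj => (A ^ (kj.1 : ℕ) * B) i kj.2

namespace Matrix

variable {K ι κ μ : Type*} [Field K] [Fintype ι]

theorem rank_eq_card_iff_forall_vecMul_eq_zero [Fintype κ] (M : Matrix ι κ K) :
    M.rank = Fintype.card ι ↔ ∀ v : ι → K, v ᵥ* M = 0 → v = 0 := by
  rw [rank_eq_finrank_span_row, eq_comm, ← Set.finrank,
    ← linearIndependent_iff_card_eq_finrank_span, ← vecMul_injective_iff, ← coe_vecMulLinear,
    injective_iff_map_eq_zero]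
  rfl

-- Cayley–Hamilton: every power of `A` is a linear combination of the `A ^ i` with `i < card ι`.
theorem vecMul_pow_mul_eq_zero_of_forall_lt_card [DecidableEq ι] {A : Matrix ι ι K}
    {B : Matrix ι κ K} {v : ι → K} (h : ∀ i < Fintype.card ι, v ᵥ* (A ^ i * B) = 0) (k : ℕ) :
    v ᵥ* (A ^ k * B) = 0 := by
  rcases isEmpty_or_nonempty ι with hι | hι
  · simp [Subsingleton.elim v 0]
  have hdeg : (Polynomial.X ^ k %ₘ A.charpoly).natDegree < Fintype.card ι := by
    rw [← A.charpoly_natDegree_eq_dim]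
    refine Polynomial.natDegree_modByMonic_lt _ A.charpoly_monic fun h1 => ?_
    simpa [h1, eq_comm] using A.charpoly_natDegree_eq_dim
  rw [pow_eq_aeval_mod_charpoly, Polynomial.aeval_eq_sum_range' hdeg, Matrix.sum_mul,
    vecMul_sum]
  refine Finset.sum_eq_zero fun i hi => ?_
  rw [smul_mul, vecMul_smul, h i (Finset.mem_range.mp hi), smul_zero]

theorem fromBlocks_zero_pow_succ [Fintype κ] [DecidableEq ι] [DecidableEq κ]
    (A : Matrix ι ι K) (C : Matrix κ ι K) (k : ℕ) :
    fromBlocks A 0 C (0 : Matrix κ κ K) ^ (k + 1) = fromBlocks (A ^ (k + 1)) 0 (C * A ^ k) 0 := by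
  induction k with
  | zero => simp
  | succ k ih =>
    rw [pow_succ, ih, fromBlocks_multiply]
    simp [pow_succ, Matrix.mul_assoc]

-- Without the ascription on `0`, the product elaborates with the `CStarMatrix` multiplication
-- instance and the `Matrix` lemmas no longer rewrite.
theorem sumElim_vecMul_fromBlocks_pow_succ_mul_fromRows [Fintype κ] [DecidableEq ι]
    [DecidableEq κ] (A : Matrix ι ι K) (B : Matrix ι μ K) (C : Matrix κ ι K) (x : ι → K)
    (y : κ → K) (k : ℕ) :
    Sum.elim x y ᵥ* (fromBlocks A 0 (-C) (0 : Matrix κ κ K) ^ (k + 1) *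
        fromRows B (0 : Matrix κ μ K)) =
      (x ᵥ* A - y ᵥ* C) ᵥ* (A ^ k * B) := by
  rw [fromBlocks_zero_pow_succ, fromBlocks_mul_fromRows, sumElim_vecMul_fromRows]
  simp only [Matrix.zero_mul, add_zero]
  rw [sub_vecMul, vecMul_vecMul, vecMul_vecMul, pow_succ', Matrix.neg_mul, Matrix.neg_mul,
    vecMul_neg, sub_eq_add_neg, Matrix.mul_assoc, Matrix.mul_assoc]

end Matrix

theorem vecMul_ctrb_eq_zero_iff {ι : Type} [Fintype ι] [DecidableEq ι] {m : ℕ}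
    (A : Matrix ι ι ℝ) (B : Matrix ι (Fin m) ℝ) (v : ι → ℝ) :
    v ᵥ* ctrb A B = 0 ↔ ∀ k : ℕ, v ᵥ* (A ^ k * B) = 0 := by
  refine ⟨fun h => vecMul_pow_mul_eq_zero_of_forall_lt_card fun k hk => ?_, fun h => ?_⟩
  · funext j
    exact congrFun h (⟨k, hk⟩, j)
  · funext kj
    exact congrFun (h kj.1) kj.2

theorem rank_ctrb_eq_card_iff {ι : Type} [Fintype ι] [DecidableEq ι] {m : ℕ}
    (A : Matrix ι ι ℝ) (B : Matrix ι (Fin m) ℝ) :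
    (ctrb A B).rank = Fintype.card ι ↔
      ∀ v : ι → ℝ, (∀ k : ℕ, v ᵥ* (A ^ k * B) = 0) → v = 0 := by
  simp only [rank_eq_card_iff_forall_vecMul_eq_zero, vecMul_ctrb_eq_zero_iff]

theorem rank_ctrb_augmented {ι κ : Type} [Fintype ι] [DecidableEq ι] [Fintype κ] [DecidableEq κ]
    {m : ℕ} (A : Matrix ι ι ℝ) (B : Matrix ι (Fin m) ℝ) (C : Matrix κ ι ℝ)
    (hctrb : (ctrb A B).rank = Fintype.card ι)
    (hrank : (fromBlocks A B C 0).rank = Fintype.card ι + Fintype.card κ) :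
    (ctrb (fromBlocks A 0 (-C) (0 : Matrix κ κ ℝ)) (fromRows B (0 : Matrix κ (Fin m) ℝ))).rank =
      Fintype.card (ι ⊕ κ) := by
  rw [rank_ctrb_eq_card_iff]
  intro v hv
  obtain ⟨x, y, rfl⟩ : ∃ x y, v = Sum.elim x y := ⟨v ∘ Sum.inl, v ∘ Sum.inr, by simp⟩
  have hxB : x ᵥ* B = 0 := by
    simpa [sumElim_vecMul_fromRows] using hv 0
  have hw : x ᵥ* A - y ᵥ* C = 0 :=
    (rank_ctrb_eq_card_iff A B).mp hctrb _ fun k => by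
      rw [← sumElim_vecMul_fromBlocks_pow_succ_mul_fromRows]; exact hv (k + 1)
  have hxy : Sum.elim x (-y) = 0 := by
    refine (rank_eq_card_iff_forall_vecMul_eq_zero _).mp (by rw [hrank, Fintype.card_sum]) _ ?_
    simp [vecMul_fromBlocks, hxB, neg_vecMul, ← sub_eq_add_neg, hw]
  rw [← Sum.elim_zero_zero, Sum.elim_eq_iff, neg_eq_zero] at hxy
  rw [hxy.1, hxy.2, Sum.elim_zero_zero]

theorem stmt5_general {n m p : ℕ}
    (A : Matrix (Fin n) (Fin n) ℝ) (B : Matrix (Fin n) (Fin m) ℝ)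
    (C : Matrix (Fin p) (Fin n) ℝ)
    (hctrb : (ctrb A B).rank = n)
    (hrank : (Matrix.fromBlocks A B C 0).rank = n + p) :
    (ctrb (Matrix.fromBlocks A 0 (-C) (0 : Matrix (Fin p) (Fin p) ℝ))
        (Matrix.of (Sum.elim B (0 : Matrix (Fin p) (Fin m) ℝ)))).rank = n + p := by
  refine (rank_ctrb_augmented A B C ?_ ?_).trans ?_ <;> simp [hctrb, hrank]

theorem stmt5 {n m p : ℕ} (hpm : p ≤ m)
    (A : Matrix (Fin n) (Fin n) ℝ) (B : Matrix (Fin n) (Fin m) ℝ)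
    (C : Matrix (Fin p) (Fin n) ℝ)
    (hctrb : (ctrb A B).rank = n)
    (hrank : (Matrix.fromBlocks A B C 0).rank = n + p) :
    (ctrb (Matrix.fromBlocks A 0 (-C) (0 : Matrix (Fin p) (Fin p) ℝ))
        (Matrix.of (Sum.elim B (0 : Matrix (Fin p) (Fin m) ℝ)))).rank = n + p :=
  stmt5_general A B C hctrb hrank
end

section
/- Let N ≥ 1, and for i = 1,...,N let Â_ii, B_i, K_i be matrices and P_i symmetric positive definite with (Â_ii + B_i K_i)ᵀ P_i + P_i (Â_ii + B_i K_i) ≺ 0. Let Â be the block matrix with diagonal blocks Â_ii and off-diagonal blocks Â_ij, and suppose Â_C (the off-diagonal part) satisfies Â_C = S·diag(P₁,...,P_N) for some skew-symmetric S. Then the closed-loop matrix Â + diag(B₁K₁,...,B_N K_N) is Hurwitz (all eigenvalues have negative real part). -/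
/-!
Write `D` for the block-diagonal matrix of the `P i`. Since the interconnection is `S * D` with
`S` skew-symmetric and `D` symmetric, it drops out of the Lyapunov expression:
`(A + S D)ᵀ D + D (A + S D) = Aᵀ D + D A`. Hence the closed loop satisfies the Lyapunov inequality
with the certificate `D`, and its right-hand side is block diagonal with the negative definite
blocks of the local certificates. For an eigenvector `v` with eigenvalue `μ` one has
`v* (Aᵀ D + D A) v = 2 Re μ · v* D v`, which forces `Re μ < 0`.
-/

open Matrix

namespace Matrix

section BlockDiagonal

variable {ι l m n R : Type*} [DecidableEq ι]

theorem dotProduct_blockDiagonal_mulVec [Fintype ι] [Fintype m] [Fintype n]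
    [NonUnitalNonAssocSemiring R] (M : ι → Matrix m n R) (x : m × ι → R) (y : n × ι → R) :
    x ⬝ᵥ (blockDiagonal M *ᵥ y) = ∑ k, (fun i => x (i, k)) ⬝ᵥ (M k *ᵥ fun j => y (j, k)) := by
  simp [dotProduct, mulVec, blockDiagonal_apply, Fintype.sum_prod_type_right, Finset.mul_sum]

theorem PosDef.blockDiagonal [Fintype ι] [Fintype m] [Ring R] [PartialOrder R] [StarRing R]
    [IsOrderedAddMonoid R] {M : ι → Matrix m m R} (hM : ∀ k, (M k).PosDef) :
    (blockDiagonal M).PosDef := by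
  refine .of_dotProduct_mulVec_pos
    (isHermitian_blockDiagonal_iff.2 fun k => (hM k).isHermitian) fun x hx => ?_
  obtain ⟨⟨i, k⟩, hik⟩ := Function.ne_iff.1 hx
  rw [dotProduct_blockDiagonal_mulVec]
  exact Finset.sum_pos' (fun l _ => (hM l).posSemidef.dotProduct_mulVec_nonneg _)
    ⟨k, Finset.mem_univ _, (hM k).dotProduct_mulVec_pos fun h => hik (congrFun h i)⟩

/-- `Matrix.blockDiagonal` with the block index moved to the first coordinate, which is the
layout of the block matrices in the statement. -/
def blockDiagonalLeft [Zero R] (M : ι → Matrix m n R) : Matrix (ι × m) (ι × n) R :=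
  (blockDiagonal M).submatrix Prod.swap Prod.swap

theorem blockDiagonalLeft_apply [Zero R] (M : ι → Matrix m n R) (p : ι × m) (q : ι × n) :
    blockDiagonalLeft M p q = if p.1 = q.1 then M p.1 p.2 q.2 else 0 :=
  rfl

theorem blockDiagonalLeft_transpose [Zero R] (M : ι → Matrix m n R) :
    (blockDiagonalLeft M)ᵀ = blockDiagonalLeft fun i => (M i)ᵀ := by
  simp [blockDiagonalLeft, transpose_submatrix]

theorem blockDiagonalLeft_add [AddZeroClass R] (M N : ι → Matrix m n R) :
    blockDiagonalLeft (M + N) = blockDiagonalLeft M + blockDiagonalLeft N := by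
  simp [blockDiagonalLeft, blockDiagonal_add, submatrix_add]

theorem blockDiagonalLeft_neg [AddGroup R] (M : ι → Matrix m n R) :
    blockDiagonalLeft (-M) = -blockDiagonalLeft M := by
  simp [blockDiagonalLeft, blockDiagonal_neg, submatrix_neg]

theorem blockDiagonalLeft_mul [Fintype ι] [Fintype m] [NonUnitalNonAssocSemiring R]
    (M : ι → Matrix l m R) (N : ι → Matrix m n R) :
    blockDiagonalLeft M * blockDiagonalLeft N = blockDiagonalLeft fun i => M i * N i := by
  rw [blockDiagonalLeft, blockDiagonalLeft, blockDiagonalLeft, blockDiagonal_mul]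
  exact submatrix_mul_equiv _ _ _ (Equiv.prodComm ι m) _

theorem PosDef.blockDiagonalLeft [Fintype ι] [Fintype m] [Ring R] [PartialOrder R] [StarRing R]
    [IsOrderedAddMonoid R] {M : ι → Matrix m m R} (hM : ∀ k, (M k).PosDef) :
    (blockDiagonalLeft M).PosDef :=
  (PosDef.blockDiagonal hM).submatrix Prod.swap_injective

end BlockDiagonal

variable {n R : Type*} [Fintype n]

theorem lyapunov_add_skew_mul [CommRing R] {A S D : Matrix n n R} (hS : Sᵀ = -S)
    (hD : Dᵀ = D) : (A + S * D)ᵀ * D + D * (A + S * D) = Aᵀ * D + D * A := by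
  rw [transpose_add, transpose_mul, hS, hD]
  noncomm_ring

theorem exists_mulVec_eq_smul_of_mem_spectrum {K : Type*} [Field K] [DecidableEq n]
    {A : Matrix n n K} {μ : K} (h : μ ∈ spectrum K A) : ∃ v ≠ 0, A *ᵥ v = μ • v := by
  rw [← spectrum_toLin', ← Module.End.hasEigenvalue_iff_mem_spectrum] at h
  obtain ⟨v, hv⟩ := h.exists_hasEigenvector
  exact ⟨v, hv.2, by simpa using Module.End.mem_eigenspace_iff.1 hv.1⟩

theorem re_star_dotProduct_map_ofReal_mulVec (M : Matrix n n ℝ) (v : n → ℂ) :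
    (star v ⬝ᵥ (M.map Complex.ofReal *ᵥ v)).re =
      (fun i => (v i).re) ⬝ᵥ (M *ᵥ fun i => (v i).re) +
        (fun i => (v i).im) ⬝ᵥ (M *ᵥ fun i => (v i).im) := by
  simp [dotProduct, mulVec, Complex.re_sum, Finset.mul_sum, ← Finset.sum_add_distrib]

theorem PosDef.re_star_dotProduct_map_ofReal_mulVec_pos {M : Matrix n n ℝ} (hM : M.PosDef)
    {v : n → ℂ} (hv : v ≠ 0) : 0 < (star v ⬝ᵥ (M.map Complex.ofReal *ᵥ v)).re := by
  rw [re_star_dotProduct_map_ofReal_mulVec]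
  obtain ⟨i, hi⟩ := Function.ne_iff.1 hv
  have hre := hM.posSemidef.dotProduct_mulVec_nonneg fun i => (v i).re
  have him := hM.posSemidef.dotProduct_mulVec_nonneg fun i => (v i).im
  simp only [star_trivial] at hre him
  by_cases h : (v i).re = 0
  · have : (fun i => (v i).im) ≠ 0 := fun h' => hi (Complex.ext h (congrFun h' i))
    exact add_pos_of_nonneg_of_pos hre (by simpa using hM.dotProduct_mulVec_pos this)
  · have : (fun i => (v i).re) ≠ 0 := fun h' => h (congrFun h' i)
    exact add_pos_of_pos_of_nonneg (by simpa using hM.dotProduct_mulVec_pos this) him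

theorem re_lt_zero_of_mem_spectrum_of_lyapunov [DecidableEq n] {A P : Matrix n n ℝ}
    (hP : P.PosDef) (hQ : (-(Aᵀ * P + P * A)).PosDef) {μ : ℂ}
    (hμ : μ ∈ spectrum ℂ (A.map Complex.ofReal)) : μ.re < 0 := by
  obtain ⟨v, hv, hAv⟩ := exists_mulVec_eq_smul_of_mem_spectrum hμ
  set Ac := A.map Complex.ofReal
  set Pc := P.map Complex.ofReal
  set p := star v ⬝ᵥ (Pc *ᵥ v)
  have hAc : Acᵀ = Acᴴ := by
    rw [← conjTranspose_map _ fun x => (Complex.conj_ofReal x).symm,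
      conjTranspose_eq_transpose_of_trivial, transpose_map]
  have hquad : star v ⬝ᵥ ((Aᵀ * P + P * A).map Complex.ofReal *ᵥ v) = (star μ + μ) * p := by
    have hmap : (Aᵀ * P + P * A).map Complex.ofReal = Acᵀ * Pc + Pc * Ac := by
      rw [Matrix.map_add _ Complex.ofReal_add, ← transpose_map]
      congr 1 <;> exact Matrix.map_mul (f := Complex.ofRealHom)
    rw [hmap, add_mulVec, dotProduct_add, ← mulVec_mulVec, ← mulVec_mulVec, hAc,
      dotProduct_mulVec, ← star_mulVec, hAv, mulVec_smul, star_smul, smul_dotProduct,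
      dotProduct_smul, smul_eq_mul, smul_eq_mul, add_mul]
  have hp := hP.re_star_dotProduct_map_ofReal_mulVec_pos hv
  have hq := hQ.re_star_dotProduct_map_ofReal_mulVec_pos hv
  rw [Matrix.map_neg _ Complex.ofReal_neg, neg_mulVec, dotProduct_neg, hquad, Complex.neg_re]
    at hq
  have hre : ((star μ + μ) * p).re = 2 * μ.re * p.re := by
    simp only [Complex.mul_re, Complex.add_re, Complex.add_im, Complex.star_def,
      Complex.conj_re, Complex.conj_im]
    ring
  nlinarith

end Matrix

theorem stmt14_general (N k m : ℕ)
    (Ab : Fin N → Fin N → Matrix (Fin k) (Fin k) ℝ)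
    (B : Fin N → Matrix (Fin k) (Fin m) ℝ) (K : Fin N → Matrix (Fin m) (Fin k) ℝ)
    (P : Fin N → Matrix (Fin k) (Fin k) ℝ) (hP : ∀ i, (P i).PosDef)
    (hLyap : ∀ i,
      (-((Ab i i + B i * K i)ᵀ * P i + P i * (Ab i i + B i * K i))).PosDef)
    (S : Matrix (Fin N × Fin k) (Fin N × Fin k) ℝ) (hS : Sᵀ = -S)
    (hAC : (Matrix.of fun p q : Fin N × Fin k =>
        if p.1 = q.1 then 0 else Ab p.1 q.1 p.2 q.2)
      = S * Matrix.of fun p q : Fin N × Fin k =>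
        if p.1 = q.1 then P p.1 p.2 q.2 else 0) :
    ∀ μ ∈ spectrum ℂ
      (((Matrix.of fun p q : Fin N × Fin k => Ab p.1 q.1 p.2 q.2)
        + Matrix.of fun p q : Fin N × Fin k =>
            if p.1 = q.1 then (B p.1 * K p.1) p.2 q.2 else 0).map Complex.ofReal),
      μ.re < 0 := by
  intro μ hμ
  set G := fun i => Ab i i + B i * K i
  set D := blockDiagonalLeft P
  have hD : D.PosDef := PosDef.blockDiagonalLeft hP
  have hDsymm : Dᵀ = D := hD.isHermitian
  have hsplit : (Matrix.of fun p q : Fin N × Fin k => Ab p.1 q.1 p.2 q.2)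
      + blockDiagonalLeft (fun i => B i * K i) = blockDiagonalLeft G + S * D := by
    rw [← show _ = S * D from hAC]
    ext ⟨i, a⟩ ⟨j, b⟩
    by_cases h : i = j
    · subst h
      simp [blockDiagonalLeft_apply, G]
    · simp [blockDiagonalLeft_apply, h]
  refine re_lt_zero_of_mem_spectrum_of_lyapunov hD ?_ (hsplit ▸ hμ)
  rw [lyapunov_add_skew_mul hS hDsymm, blockDiagonalLeft_transpose, blockDiagonalLeft_mul,
    blockDiagonalLeft_mul, ← blockDiagonalLeft_add, ← blockDiagonalLeft_neg]
  exact PosDef.blockDiagonalLeft hLyap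

theorem stmt14 (N k m : ℕ) (hN : 1 ≤ N)
    (Ab : Fin N → Fin N → Matrix (Fin k) (Fin k) ℝ)
    (B : Fin N → Matrix (Fin k) (Fin m) ℝ) (K : Fin N → Matrix (Fin m) (Fin k) ℝ)
    (P : Fin N → Matrix (Fin k) (Fin k) ℝ) (hP : ∀ i, (P i).PosDef)
    (hLyap : ∀ i,
      (-((Ab i i + B i * K i)ᵀ * P i + P i * (Ab i i + B i * K i))).PosDef)
    (S : Matrix (Fin N × Fin k) (Fin N × Fin k) ℝ) (hS : Sᵀ = -S)
    (hAC : (Matrix.of fun p q : Fin N × Fin k =>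
        if p.1 = q.1 then 0 else Ab p.1 q.1 p.2 q.2)
      = S * Matrix.of fun p q : Fin N × Fin k =>
        if p.1 = q.1 then P p.1 p.2 q.2 else 0) :
    ∀ μ ∈ spectrum ℂ
      (((Matrix.of fun p q : Fin N × Fin k => Ab p.1 q.1 p.2 q.2)
        + Matrix.of fun p q : Fin N × Fin k =>
            if p.1 = q.1 then (B p.1 * K p.1) p.2 q.2 else 0).map Complex.ofReal),
      μ.re < 0 :=
  stmt14_general N k m Ab B K P hP hLyap S hS hAC
end
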